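/- Let E = E_{n+1}(K) be the inverse polynomial module with its operators ∂₀,…,∂ₙ. Then the de Rham (Koszul) homology of E with respect to ∂₀,…,∂ₙ satisfies: H_i(∂; E) = 0 for all i ≠ 0, and H₀(∂; E) = E/(∂₀E + ⋯ + ∂ₙE) is a one-dimensional K-vector space. -/

import Mathlib

/-- Koszul differential of a family of `K`-linear endomorphisms. -/
noncomputable def koszulD {K M : Type} [Field K] [AddCommGroup M] [Module K M]
    {m : ℕ} (f : Fin m → Module.End K M) (i : ℕ) :
    ({s : Finset (Fin m) // s.card = i + 1} → M) →ₗ[K]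
      ({s : Finset (Fin m) // s.card = i} → M) :=
  LinearMap.pi fun t => ∑ j ∈ (t.1ᶜ).attach,
    ((-1 : K) ^ (t.1.filter (fun k => k < j.1)).card) •
      ((f j.1) ∘ₗ LinearMap.proj
        (⟨insert j.1 t.1, by
          rw [Finset.card_insert_of_notMem (Finset.mem_compl.mp j.2), t.2]⟩ :
          {s : Finset (Fin m) // s.card = i + 1}))

/-- Koszul cycles: kernel of the outgoing differential (everything in degree 0). -/
noncomputable def koszulCycles {K M : Type} [Field K] [AddCommGroup M] [Module K M]
    {m : ℕ} (f : Fin m → Module.End K M) :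
    (i : ℕ) → Submodule K ({s : Finset (Fin m) // s.card = i} → M)
  | 0 => ⊤
  | (i + 1) => LinearMap.ker (koszulD f i)

/-- `i`-th Koszul homology of the family `f`: cycles modulo boundaries. -/
@[reducible] noncomputable def koszulHomology {K M : Type} [Field K] [AddCommGroup M]
    [Module K M] {m : ℕ} (f : Fin m → Module.End K M) (i : ℕ) : Type :=
  ↥(koszulCycles f i) ⧸
    Submodule.comap (koszulCycles f i).subtype (LinearMap.range (koszulD f i))

/-- Euler characteristic of Koszul homology of a family of `m` endomorphisms. -/
noncomputable def koszulChi {K M : Type} [Field K] [AddCommGroup M] [Module K M]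
    {m : ℕ} (f : Fin m → Module.End K M) : ℤ :=
  ∑ i ∈ Finset.range (m + 1), (-1 : ℤ) ^ i * (Module.finrank K (koszulHomology f i) : ℤ)

/-- The inverse polynomial module `E_m(K)`: the `K`-vector space with basis the monomials
`X^b`, `b : Fin m → ℤ` with all `bᵢ ≤ -1`; the index `c : Fin m → ℕ` encodes the exponent
`b = -(c + 1)`. -/
@[reducible] def InvPoly (K : Type) [Field K] (m : ℕ) : Type := (Fin m → ℕ) →₀ K

/-- Multiplication by `Xᵢ` on the inverse polynomial module:
`Xᵢ · X^b = X^{b+eᵢ}` if `bᵢ ≤ -2` and `0` if `bᵢ = -1`. -/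
noncomputable def invMulX (K : Type) [Field K] (m : ℕ) (i : Fin m) :
    Module.End K (InvPoly K m) :=
  Finsupp.lsum K fun c =>
    if c i = 0 then 0 else Finsupp.lsingle (Function.update c i (c i - 1))

/-- The operator `∂ᵢ` on the inverse polynomial module: `∂ᵢ(X^b) = bᵢ · X^{b-eᵢ}`. -/
noncomputable def invPartial (K : Type) [Field K] (m : ℕ) (i : Fin m) :
    Module.End K (InvPoly K m) :=
  Finsupp.lsum K fun c =>
    (-(c i : K) - 1) • (Finsupp.lsingle (Function.update c i (c i + 1)) : K →ₗ[K] InvPoly K m)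


noncomputable def invSigma (K : Type) [Field K] (m : ℕ) (i : Fin m) :
    Module.End K (InvPoly K m) :=
  Finsupp.lsum K fun c =>
    if c i = 0 then 0 else
      (-(c i : K))⁻¹ • (Finsupp.lsingle (Function.update c i (c i - 1)) : K →ₗ[K] InvPoly K m)

noncomputable def invProj (K : Type) [Field K] (m : ℕ) (a : ℕ) :
    Module.End K (InvPoly K m) :=
  Finsupp.lsum K fun c =>
    if ∀ k : Fin m, (k : ℕ) < a → c k = 0 then (Finsupp.lsingle c : K →ₗ[K] InvPoly K m) else 0

noncomputable def invQ (K : Type) [Field K] (m : ℕ) (a : Fin m) :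
    Module.End K (InvPoly K m) :=
  invProj K m a.val ∘ₗ invSigma K m a

section
variable (K : Type) [Field K] [CharZero K] (m : ℕ)

example (c : Fin m → ℕ) (r : K) (j : Fin m) :
    invPartial K m j (Finsupp.single c r) =
      (-(c j : K) - 1) • Finsupp.single (Function.update c j (c j + 1)) r := by
  simp [invPartial]

end

section
variable (K : Type) [Field K] [CharZero K] (m : ℕ)

lemma invPartial_single (c : Fin m → ℕ) (r : K) (j : Fin m) :
    invPartial K m j (Finsupp.single c r) =
      (-(c j : K) - 1) • Finsupp.single (Function.update c j (c j + 1)) r := by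
  simp [invPartial]

lemma invSigma_single (c : Fin m → ℕ) (r : K) (j : Fin m) :
    invSigma K m j (Finsupp.single c r) =
      if c j = 0 then 0 else
        (-(c j : K))⁻¹ • Finsupp.single (Function.update c j (c j - 1)) r := by
  simp [invSigma]; split_ifs <;> simp

lemma invProj_single (c : Fin m → ℕ) (r : K) (a : ℕ) :
    invProj K m a (Finsupp.single c r) =
      if ∀ k : Fin m, (k : ℕ) < a → c k = 0 then Finsupp.single c r else 0 := by
  simp [invProj]; split_ifs <;> simp

lemma invProj_zero : invProj K m 0 = LinearMap.id := by
  apply Finsupp.lhom_ext; intro c r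
  simp [invProj_single]

lemma invQ_partial_self (a : Fin m) :
    invQ K m a ∘ₗ invPartial K m a = invProj K m a.val := by
  apply Finsupp.lhom_ext; intro c r
  have h1 : ((c a : K) + 1) ≠ 0 := Nat.cast_add_one_ne_zero (c a)
  simp only [LinearMap.comp_apply, invQ, invPartial_single, map_smul, invSigma_single,
    Function.update_self, Nat.add_sub_cancel, Nat.succ_ne_zero, if_false,
    Function.update_idem, Function.update_eq_self, invProj_single, smul_smul]
  push_cast
  have h2 : (-(c a : K) - 1) * (-((c a : K) + 1))⁻¹ = 1 := by
    have h3 : (-(c a : K) - 1) = -((c a : K) + 1) := by ring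
    rw [h3, mul_inv_cancel₀ (neg_ne_zero.mpr h1)]
  rw [h2, one_smul]

end

section
variable {K : Type} [Field K] [CharZero K] {m : ℕ}

lemma update_forall_lt (c : Fin m → ℕ) (a : Fin m) (b : ℕ) (hb : b ≤ a.val) (v : ℕ) :
    (∀ k : Fin m, (k : ℕ) < b → (Function.update c a v) k = 0) ↔
      (∀ k : Fin m, (k : ℕ) < b → c k = 0) := by
  constructor <;> intro hh k hk <;>
    [ (have hka : k ≠ a := by intro e; subst e; omega;
       have := hh k hk; rwa [Function.update_of_ne hka] at this) ;
      (have hka : k ≠ a := by intro e; subst e; omega;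
       rw [Function.update_of_ne hka]; exact hh k hk) ]

lemma forall_lt_succ (c : Fin m → ℕ) (j : Fin m) :
    (∀ k : Fin m, (k : ℕ) < j.val + 1 → c k = 0) ↔
      ((∀ k : Fin m, (k : ℕ) < j.val → c k = 0) ∧ c j = 0) := by
  constructor
  · intro hh
    exact ⟨fun k hk => hh k (Nat.lt_succ_of_lt hk), hh j (Nat.lt_succ_self _)⟩
  · rintro ⟨h1, h2⟩ k hk
    rcases Nat.lt_succ_iff_lt_or_eq.mp hk with h | h
    · exact h1 k h
    · have : k = j := Fin.ext h
      subst this; exact h2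

lemma invQ_partial_lt (j a : Fin m) (h : j < a) :
    invQ K m a ∘ₗ invPartial K m j = 0 := by
  apply Finsupp.lhom_ext; intro c r
  have hja : j ≠ a := ne_of_lt h
  have haj : a ≠ j := hja.symm
  simp only [LinearMap.comp_apply, invQ, invPartial_single, map_smul, invSigma_single,
    Function.update_of_ne haj, LinearMap.zero_apply]
  by_cases h0 : c a = 0
  · simp [h0]
  · rw [if_neg h0]
    simp only [map_smul, invProj_single, smul_smul]
    rw [if_neg, smul_zero]
    intro hall
    have hlt : (j : ℕ) < (a : ℕ) := h
    have := hall j hlt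
    rw [Function.update_of_ne hja, Function.update_self] at this
    exact Nat.succ_ne_zero _ this

lemma partial_invQ_lt (a j : Fin m) (h : a < j) :
    invPartial K m j ∘ₗ invQ K m a = invQ K m a ∘ₗ invPartial K m j := by
  apply Finsupp.lhom_ext; intro c r
  have haj : a ≠ j := ne_of_lt h
  have hja : j ≠ a := haj.symm
  have e1 : ∀ (g : Fin m → ℕ) (v : ℕ),
      (∀ k : Fin m, (k : ℕ) < a.val → (Function.update g a v) k = 0) ↔
        (∀ k : Fin m, (k : ℕ) < a.val → g k = 0) :=
    fun g v => update_forall_lt g a a.val (le_refl _) v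
  have e2 : ∀ (g : Fin m → ℕ) (v : ℕ),
      (∀ k : Fin m, (k : ℕ) < a.val → (Function.update g j v) k = 0) ↔
        (∀ k : Fin m, (k : ℕ) < a.val → g k = 0) :=
    fun g v => update_forall_lt g j a.val (le_of_lt h) v
  simp only [LinearMap.comp_apply, invQ, invPartial_single, map_smul, invSigma_single,
    Function.update_of_ne hja, Function.update_of_ne haj, invProj_single, e1, e2]
  by_cases h0 : c a = 0
  · simp [h0]
  · rw [if_neg h0, if_neg h0]
    simp only [map_smul, invProj_single, e1, e2]
    by_cases h1 : ∀ k : Fin m, (k : ℕ) < a.val → c k = 0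
    · rw [if_pos h1, if_pos h1]
      simp only [map_smul, invPartial_single, Function.update_of_ne hja, smul_smul]
      rw [Function.update_comm haj]
      congr 1
      ring
    · rw [if_neg h1, if_neg h1]
      simp

lemma partial_invQ_self (j : Fin m) :
    invPartial K m j ∘ₗ invQ K m j = invProj K m j.val - invProj K m (j.val + 1) := by
  apply Finsupp.lhom_ext; intro c r
  simp only [LinearMap.comp_apply, invQ, LinearMap.sub_apply, invSigma_single,
    invProj_single, forall_lt_succ]
  by_cases h0 : c j = 0
  · rw [if_pos h0, map_zero, map_zero]
    by_cases h1 : ∀ k : Fin m, (k : ℕ) < j.val → c k = 0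
    · rw [if_pos h1, if_pos (⟨h1, h0⟩ :
        (∀ k : Fin m, (k : ℕ) < j.val → c k = 0) ∧ c j = 0), sub_self]
    · have hP2 : ¬((∀ k : Fin m, (k : ℕ) < j.val → c k = 0) ∧ c j = 0) := fun hc => h1 hc.1
      rw [if_neg h1, if_neg hP2, sub_self]
  · rw [if_neg h0]
    have hP2 : ¬((∀ k : Fin m, (k : ℕ) < j.val → c k = 0) ∧ c j = 0) := fun hc => h0 hc.2
    simp only [map_smul, invProj_single,
      update_forall_lt c j j.val (le_refl _), forall_lt_succ]
    rw [if_neg hP2, sub_zero]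
    by_cases h1 : ∀ k : Fin m, (k : ℕ) < j.val → c k = 0
    · rw [if_pos h1, if_pos h1, invPartial_single, Function.update_self,
        Function.update_idem, smul_smul]
      have hc1 : c j - 1 + 1 = c j := Nat.succ_pred_eq_of_pos (Nat.pos_of_ne_zero h0)
      rw [hc1, Function.update_eq_self]
      have hcast : ((c j - 1 : ℕ) : K) = (c j : K) - 1 := by
        rw [Nat.cast_sub (Nat.one_le_iff_ne_zero.mpr h0), Nat.cast_one]
      have hne : (c j : K) ≠ 0 := Nat.cast_ne_zero.mpr h0
      have : (-(c j : K))⁻¹ * (-(↑(c j - 1) : K) - 1) = 1 := by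
        rw [hcast]
        have h3 : (-((c j : K) - 1) - 1) = -(c j : K) := by ring
        rw [h3, inv_mul_cancel₀ (neg_ne_zero.mpr hne)]
      rw [this, one_smul]
    · rw [if_neg h1, if_neg h1]
      simp

end


section Chain
variable {K M : Type} [Field K] [AddCommGroup M] [Module K M] {m : ℕ}

/-- totalization of a cochain: extend to all finsets by zero -/
def tot {i : ℕ} (x : {s : Finset (Fin m) // s.card = i} → M) (u : Finset (Fin m)) : M :=
  if h : u.card = i then x ⟨u, h⟩ else 0

lemma tot_eq {i : ℕ} (x : {s : Finset (Fin m) // s.card = i} → M) (u : Finset (Fin m))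
    (h : u.card = i) : tot x u = x ⟨u, h⟩ := dif_pos h

lemma koszulD_apply (f : Fin m → Module.End K M) (i : ℕ)
    (x : {s : Finset (Fin m) // s.card = i + 1} → M) (t : {s : Finset (Fin m) // s.card = i}) :
    koszulD f i x t = ∑ j ∈ t.1ᶜ,
      ((-1 : K) ^ (t.1.filter (fun k => k < j)).card) • f j (tot x (insert j t.1)) := by
  rw [← Finset.sum_attach (t.1ᶜ)
    (fun j => ((-1 : K) ^ (t.1.filter (fun k => k < j)).card) • f j (tot x (insert j t.1)))]
  simp only [koszulD, LinearMap.pi_apply, LinearMap.sum_apply, LinearMap.smul_apply,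
    LinearMap.comp_apply, LinearMap.proj_apply]
  refine Finset.sum_congr rfl fun j _ => ?_
  rw [tot_eq x (insert j.1 t.1)
    (by rw [Finset.card_insert_of_notMem (Finset.mem_compl.mp j.2), t.2])]

/-- the contracting homotopy -/
noncomputable def hty (Q : Fin m → Module.End K M) (i : ℕ) :
    ({s : Finset (Fin m) // s.card = i} → M) →ₗ[K]
      ({s : Finset (Fin m) // s.card = i + 1} → M) :=
  LinearMap.pi fun s =>
    (Q (s.1.min' (Finset.card_pos.mp (by rw [s.2]; exact Nat.succ_pos i)))) ∘ₗ
      LinearMap.proj (⟨s.1.erase (s.1.min' (Finset.card_pos.mp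
          (by rw [s.2]; exact Nat.succ_pos i))),
        by rw [Finset.card_erase_of_mem (Finset.min'_mem _ _), s.2]; rfl⟩ :
        {s : Finset (Fin m) // s.card = i})

lemma hty_apply (Q : Fin m → Module.End K M) (i : ℕ)
    (x : {s : Finset (Fin m) // s.card = i} → M) (s : {s : Finset (Fin m) // s.card = i + 1})
    (hne : s.1.Nonempty) :
    hty Q i x s = Q (s.1.min' hne) (tot x (s.1.erase (s.1.min' hne))) := by
  simp only [hty, LinearMap.pi_apply, LinearMap.comp_apply, LinearMap.proj_apply]
  rw [tot_eq x _ (by rw [Finset.card_erase_of_mem (Finset.min'_mem _ _), s.2]; rfl)]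

end Chain

section Key
variable {K M : Type} [Field K] [AddCommGroup M] [Module K M] {m : ℕ}
  (f : Fin m → Module.End K M) (P : ℕ → Module.End K M) (Q : Fin m → Module.End K M)

lemma key0 (hQ4 : ∀ j, f j ∘ₗ Q j = P j.val - P (j.val + 1)) (hP0 : P 0 = LinearMap.id)
    (x : {s : Finset (Fin m) // s.card = 0} → M) (t : {s : Finset (Fin m) // s.card = 0}) :
    koszulD f 0 (hty Q 0 x) t = x t - P m (x t) := by
  have ht : t.1 = ∅ := Finset.card_eq_zero.mp t.2
  rw [koszulD_apply]
  have hterm : ∀ j ∈ t.1ᶜ,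
      ((-1 : K) ^ (t.1.filter (fun k => k < j)).card) • f j (tot (hty Q 0 x) (insert j t.1))
        = P j.val (x t) - P (j.val + 1) (x t) := by
    intro j _
    have hxt : (⟨t.1, t.2⟩ : {s : Finset (Fin m) // s.card = 0}) = t := rfl
    have hins : insert j t.1 = {j} := by rw [ht]; rfl
    have hcard : (insert j t.1).card = 1 := by rw [hins]; rfl
    have hnei : (insert j t.1).Nonempty := ⟨j, Finset.mem_insert_self _ _⟩
    have hmin : (insert j t.1).min' hnei = j := by
      simp [hins]
    rw [tot_eq _ _ hcard, hty_apply Q 0 x ⟨_, hcard⟩ hnei]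
    simp only
    rw [hmin, hins, Finset.erase_singleton, ht]
    rw [Finset.filter_empty, Finset.card_empty, pow_zero, one_smul]
    rw [tot_eq x ∅ Finset.card_empty]
    have h4 : f j (Q j (x ⟨∅, Finset.card_empty⟩)) =
        P j.val (x ⟨∅, Finset.card_empty⟩) - P (j.val + 1) (x ⟨∅, Finset.card_empty⟩) := by
      have := LinearMap.ext_iff.mp (hQ4 j) (x ⟨∅, Finset.card_empty⟩)
      simpa using this
    rw [h4]
    congr 1 <;> · congr 1; exact congrArg x (Subtype.ext ht.symm)
  rw [Finset.sum_congr rfl hterm]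
  rw [show t.1ᶜ = Finset.univ by rw [ht]; exact Finset.compl_empty]
  rw [Fin.sum_univ_eq_sum_range (fun v => P v (x t) - P (v + 1) (x t)) m]
  rw [Finset.sum_range_sub' (fun v => P v (x t))]
  rw [hP0, LinearMap.id_apply]

end Key

section Key1
variable {K M : Type} [Field K] [AddCommGroup M] [Module K M] {m : ℕ}

lemma key1 (f : Fin m → Module.End K M) (P : ℕ → Module.End K M) (Q : Fin m → Module.End K M)
    (hQ1 : ∀ a, Q a ∘ₗ f a = P a.val)
    (hQ2 : ∀ a j, a < j → f j ∘ₗ Q a = Q a ∘ₗ f j)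
    (hQ3 : ∀ a j, j < a → Q a ∘ₗ f j = 0)
    (hQ4 : ∀ j, f j ∘ₗ Q j = P j.val - P (j.val + 1))
    (hP0 : P 0 = LinearMap.id)
    (i : ℕ) (x : {s : Finset (Fin m) // s.card = i + 1} → M)
    (t : {s : Finset (Fin m) // s.card = i + 1}) :
    koszulD f (i + 1) (hty Q (i + 1) x) t + hty Q i (koszulD f i x) t = x t := by
  have hne : t.1.Nonempty := Finset.card_pos.mp (by rw [t.2]; exact Nat.succ_pos i)
  set a := t.1.min' hne with ha
  have hat : a ∈ t.1 := Finset.min'_mem _ _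
  have hanotc : a ∉ t.1ᶜ := by simp [hat]
  have hca : (t.1.erase a).card = i := by rw [Finset.card_erase_of_mem hat, t.2]; rfl
  have hxt : (⟨t.1, t.2⟩ : {s : Finset (Fin m) // s.card = i + 1}) = t := rfl
  have hcompl : (t.1.erase a)ᶜ = insert a (t.1ᶜ) := by
    ext k
    simp only [Finset.mem_compl, Finset.mem_erase, Finset.mem_insert]
    tauto
  rw [hty_apply Q i _ t hne, ← ha, tot_eq _ _ hca, koszulD_apply f i x ⟨t.1.erase a, hca⟩]
  simp only
  rw [hcompl, Finset.sum_insert hanotc, map_add, map_sum]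
  have hfa : ((t.1.erase a).filter (fun k => k < a)).card = 0 := by
    rw [Finset.card_eq_zero, Finset.filter_eq_empty_iff]
    intro k hk
    exact not_lt.mpr (Finset.min'_le t.1 k (Finset.mem_of_mem_erase hk))
  rw [hfa, pow_zero, one_smul, Finset.insert_erase hat, tot_eq x t.1 t.2, hxt]
  have hQa : Q a (f a (x t)) = P a.val (x t) := by
    have := LinearMap.ext_iff.mp (hQ1 a) (x t); simpa using this
  rw [hQa, koszulD_apply f (i + 1) (hty Q (i + 1) x) t]
  rw [show ∀ u v w : M, u + (v + w) = u + w + v from fun u v w => by abel]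
  rw [← Finset.sum_add_distrib]
  have hjs : ∀ j ∈ t.1ᶜ,
      (((-1 : K) ^ (t.1.filter (fun k => k < j)).card) •
          f j (tot (hty Q (i + 1) x) (insert j t.1))
        + Q a (((-1 : K) ^ ((t.1.erase a).filter (fun k => k < j)).card) •
            f j (tot x (insert j (t.1.erase a)))))
      = if (j : ℕ) < (a : ℕ) then P (j : ℕ) (x t) - P ((j : ℕ) + 1) (x t) else 0 := by
    intro j hjc
    have hjt : j ∉ t.1 := Finset.mem_compl.mp hjc
    have hja : j ≠ a := fun e => hjt (e ▸ hat)
    have hcins : (insert j t.1).card = i + 1 + 1 := by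
      rw [Finset.card_insert_of_notMem hjt, t.2]
    have hnei : (insert j t.1).Nonempty := ⟨j, Finset.mem_insert_self _ _⟩
    rw [tot_eq _ _ hcins, hty_apply Q (i + 1) x ⟨_, hcins⟩ hnei]
    simp only
    rcases lt_or_gt_of_ne hja with hlt | hgt
    · -- j < a
      have hmin : (insert j t.1).min' hnei = j := by
        apply le_antisymm (Finset.min'_le _ _ (Finset.mem_insert_self _ _))
        apply Finset.le_min'
        intro y hy
        rcases Finset.mem_insert.mp hy with rfl | hy
        · exact le_refl _
        · exact le_of_lt (lt_of_lt_of_le hlt (Finset.min'_le _ _ hy))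
      have hfj : (t.1.filter (fun k => k < j)).card = 0 := by
        rw [Finset.card_eq_zero, Finset.filter_eq_empty_iff]
        intro k hk
        exact not_lt.mpr (le_of_lt (lt_of_lt_of_le hlt (Finset.min'_le _ _ hk)))
      rw [hmin, Finset.erase_insert hjt, tot_eq x t.1 t.2, hxt, hfj, pow_zero, one_smul]
      have h4 : f j (Q j (x t)) = P (j : ℕ) (x t) - P ((j : ℕ) + 1) (x t) := by
        have := LinearMap.ext_iff.mp (hQ4 j) (x t); simpa using this
      have h3 : Q a (f j (tot x (insert j (t.1.erase a)))) = 0 := by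
        have := LinearMap.ext_iff.mp (hQ3 a j hlt) (tot x (insert j (t.1.erase a)))
        simpa using this
      rw [map_smul, h3, smul_zero, add_zero, h4, if_pos (show (j : ℕ) < (a : ℕ) from hlt)]
    · -- a < j
      have hmin : (insert j t.1).min' hnei = a := by
        apply le_antisymm (Finset.min'_le _ _ (Finset.mem_insert_of_mem hat))
        apply Finset.le_min'
        intro y hy
        rcases Finset.mem_insert.mp hy with rfl | hy
        · exact le_of_lt hgt
        · exact Finset.min'_le _ _ hy
      rw [hmin, Finset.erase_insert_of_ne hja]
      have hsign : (t.1.filter (fun k => k < j)).card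
          = ((t.1.erase a).filter (fun k => k < j)).card + 1 := by
        have hfil : t.1.filter (fun k => k < j)
            = insert a ((t.1.erase a).filter (fun k => k < j)) := by
          conv_lhs => rw [← Finset.insert_erase hat]
          rw [Finset.filter_insert, if_pos hgt]
        rw [hfil, Finset.card_insert_of_notMem (by simp)]
      have h2 : f j (Q a (tot x (insert j (t.1.erase a))))
          = Q a (f j (tot x (insert j (t.1.erase a)))) := by
        have := LinearMap.ext_iff.mp (hQ2 a j hgt) (tot x (insert j (t.1.erase a)))
        simpa using this
      rw [h2, map_smul, hsign, pow_succ,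
        if_neg (not_lt.mpr (le_of_lt (show (a : ℕ) < (j : ℕ) from hgt)))]
      rw [mul_neg_one, neg_smul, neg_add_cancel]
  rw [Finset.sum_congr rfl hjs]
  rw [Finset.sum_subset (Finset.subset_univ t.1ᶜ) (fun j _ hj => by
    have hjt : j ∈ t.1 := by simpa [Finset.mem_compl] using hj
    exact if_neg (not_lt.mpr (Finset.min'_le t.1 j hjt)))]
  rw [Fin.sum_univ_eq_sum_range
    (fun v => if v < (a : ℕ) then P v (x t) - P (v + 1) (x t) else 0) m]
  rw [← Finset.sum_subset (Finset.range_subset_range.mpr (le_of_lt a.isLt)) (fun v _ hv => by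
    exact if_neg (by simpa [Finset.mem_range] using hv))]
  rw [Finset.sum_congr rfl (fun v hv => if_pos (Finset.mem_range.mp hv))]
  rw [Finset.sum_range_sub' (fun v => P v (x t))]
  rw [hP0, LinearMap.id_apply]
  abel

end Key1

section Assemble
variable {K : Type} [Field K] [CharZero K] {m : ℕ}

lemma lapply_invPartial (j : Fin m) :
    (Finsupp.lapply (0 : Fin m → ℕ) : InvPoly K m →ₗ[K] K) ∘ₗ invPartial K m j = 0 := by
  apply Finsupp.lhom_ext; intro c r
  have hupd : Function.update c j (c j + 1) ≠ 0 := fun h =>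
    Nat.succ_ne_zero (c j) (by simpa using congrFun h j)
  simp [invPartial_single, Finsupp.single_eq_of_ne hupd.symm]

lemma invProj_top :
    invProj K m m = (Finsupp.lsingle (0 : Fin m → ℕ) : K →ₗ[K] InvPoly K m) ∘ₗ
      (Finsupp.lapply (0 : Fin m → ℕ) : InvPoly K m →ₗ[K] K) := by
  apply Finsupp.lhom_ext; intro c r
  have hiff : (∀ k : Fin m, (k : ℕ) < m → c k = 0) ↔ c = 0 := by
    constructor
    · intro h; funext k; exact h k k.isLt
    · intro h k _; rw [h]; rfl
  simp only [invProj_single, hiff, LinearMap.comp_apply, Finsupp.lapply_apply,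
    Finsupp.lsingle_apply, Finsupp.single_apply]
  by_cases h : c = 0
  · subst h; simp
  · rw [if_neg h, if_neg h, Finsupp.single_zero]

lemma range_koszulD_zero :
    LinearMap.range (koszulD (invPartial K m) 0) =
      LinearMap.ker ((Finsupp.lapply (0 : Fin m → ℕ) : InvPoly K m →ₗ[K] K) ∘ₗ
        LinearMap.proj (⟨∅, Finset.card_empty⟩ : {s : Finset (Fin m) // s.card = 0})) := by
  apply le_antisymm
  · rintro _ ⟨y, rfl⟩
    simp only [LinearMap.mem_ker, LinearMap.comp_apply, LinearMap.proj_apply]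
    rw [koszulD_apply, map_sum]
    refine Finset.sum_eq_zero fun j _ => ?_
    rw [map_smul]
    have h := LinearMap.ext_iff.mp (lapply_invPartial (K := K) j)
      (tot y (insert j (⟨∅, Finset.card_empty⟩ : {s : Finset (Fin m) // s.card = 0}).1))
    simp only [LinearMap.comp_apply, LinearMap.zero_apply] at h
    rw [h, smul_zero]
  · intro x hx
    simp only [LinearMap.mem_ker, LinearMap.comp_apply, LinearMap.proj_apply,
      Finsupp.lapply_apply] at hx
    refine ⟨hty (invQ K m) 0 x, ?_⟩
    funext t
    rw [key0 (invPartial K m) (invProj K m) (invQ K m) partial_invQ_self (invProj_zero K m) x t]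
    have ht0 : t = ⟨∅, Finset.card_empty⟩ := Subtype.ext (Finset.card_eq_zero.mp t.2)
    rw [invProj_top]
    simp only [LinearMap.comp_apply, Finsupp.lapply_apply, Finsupp.lsingle_apply]
    rw [ht0, hx, Finsupp.single_zero, sub_zero]

lemma iSup_range_invPartial :
    (⨆ i : Fin m, LinearMap.range (invPartial K m i)) =
      LinearMap.ker (Finsupp.lapply (0 : Fin m → ℕ) : InvPoly K m →ₗ[K] K) := by
  apply le_antisymm
  · exact iSup_le fun j => LinearMap.range_le_ker_iff.mpr (lapply_invPartial j)
  · intro z hz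
    rw [LinearMap.mem_ker, Finsupp.lapply_apply] at hz
    have hproj : invProj K m m z = 0 := by
      rw [invProj_top]
      simp [hz]
    have h0 := key0 (invPartial K m) (invProj K m) (invQ K m) partial_invQ_self (invProj_zero K m)
      (fun _ => z) ⟨∅, Finset.card_empty⟩
    rw [hproj, sub_zero] at h0
    rw [← h0, koszulD_apply]
    refine Submodule.sum_mem _ fun j _ => ?_
    exact (le_iSup (fun i : Fin m => LinearMap.range (invPartial K m i)) j)
      (Submodule.smul_mem _ _ (LinearMap.mem_range_self _ _))

lemma lapply_surjective :
    Function.Surjective (Finsupp.lapply (0 : Fin m → ℕ) : InvPoly K m →ₗ[K] K) :=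
  fun r => ⟨Finsupp.single 0 r, by simp⟩

end Assemble


set_option synthInstance.maxHeartbeats 1000000 in
set_option maxHeartbeats 1000000 in
/-- For the inverse polynomial module `E = E_{n+1}(K)` with its operators
`∂₀, …, ∂ₙ`, the de Rham (Koszul) homology satisfies `H_i(∂; E) = 0` for `i ≠ 0`, while
`H₀(∂; E) = E/(∂₀E + ⋯ + ∂ₙE)` is one-dimensional over `K`. -/
theorem koszulHomology_invPoly_partial (K : Type) [Field K] [CharZero K] (n : ℕ) :
    (∀ i : ℕ, i ≠ 0 → Subsingleton (koszulHomology (invPartial K (n + 1)) i)) ∧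
    Module.finrank K (koszulHomology (invPartial K (n + 1)) 0) = 1 ∧
    Module.finrank K
      (InvPoly K (n + 1) ⧸ (⨆ i : Fin (n + 1), LinearMap.range (invPartial K (n + 1) i)))
      = 1 := by
  set m := n + 1
  refine ⟨?_, ?_, ?_⟩
  · -- vanishing in positive degrees
    intro i hi
    obtain ⟨i', rfl⟩ : ∃ i', i = i' + 1 :=
      ⟨i - 1, (Nat.succ_pred_eq_of_pos (Nat.pos_of_ne_zero hi)).symm⟩
    have htop : Submodule.comap (koszulCycles (invPartial K m) (i' + 1)).subtype
        (LinearMap.range (koszulD (invPartial K m) (i' + 1))) = ⊤ := by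
      rw [Submodule.eq_top_iff']
      intro y
      rw [Submodule.mem_comap]
      have hy : koszulD (invPartial K m) i' y.1 = 0 := y.2
      refine ⟨hty (invQ K m) (i' + 1) y.1, ?_⟩
      funext t
      have hk := key1 (invPartial K m) (invProj K m) (invQ K m) (invQ_partial_self K m)
        (fun a j h => partial_invQ_lt a j h) (fun a j h => invQ_partial_lt j a h)
        partial_invQ_self (invProj_zero K m) i' y.1 t
      rw [hy, map_zero] at hk
      simpa using hk
    exact Submodule.Quotient.subsingleton_iff.mpr htop
  · -- degree 0 homology has dimension 1
    have hker : LinearMap.ker (((Finsupp.lapply (0 : Fin m → ℕ) : InvPoly K m →ₗ[K] K) ∘ₗ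
          LinearMap.proj (⟨∅, Finset.card_empty⟩ : {s : Finset (Fin m) // s.card = 0})) ∘ₗ
          (koszulCycles (invPartial K m) 0).subtype)
        = Submodule.comap (koszulCycles (invPartial K m) 0).subtype (LinearMap.range (koszulD (invPartial K m) 0)) := by
      rw [LinearMap.ker_comp, range_koszulD_zero]
    have hsurj : Function.Surjective
        (((Finsupp.lapply (0 : Fin m → ℕ) : InvPoly K m →ₗ[K] K) ∘ₗ
          LinearMap.proj (⟨∅, Finset.card_empty⟩ : {s : Finset (Fin m) // s.card = 0})) ∘ₗ
          (koszulCycles (invPartial K m) 0).subtype) := by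
      intro r
      refine ⟨⟨fun _ => Finsupp.single 0 r, Submodule.mem_top⟩, ?_⟩
      simp
    have e := (Submodule.quotEquivOfEq _ _ hker.symm).trans
      (LinearMap.quotKerEquivOfSurjective (R := K) (M := ↥(koszulCycles (invPartial K m) 0))
        (M₂ := K) _ hsurj)
    exact e.finrank_eq.trans (Module.finrank_self K)
  · -- the cokernel of the partials has dimension 1
    have hS := iSup_range_invPartial (K := K) (m := m)
    have e : (InvPoly K m ⧸ (⨆ i : Fin m, LinearMap.range (invPartial K m i))) ≃ₗ[K] K :=
      (Submodule.quotEquivOfEq _ _ hS).trans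
        ((Finsupp.lapply (0 : Fin m → ℕ) : InvPoly K m →ₗ[K] K).quotKerEquivOfSurjective
          lapply_surjective)
    exact e.finrank_eq.trans (Module.finrank_self K)
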